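/- Let S ⊆ M_N(W) be a ∂_q-invariant subalgebra of matrices over the first Weyl algebra, and suppose S_1 = k[p]·S (the span of all p^n·s, s ∈ S, n ≥ 0) is a prime algebra satisfying the ascending chain condition on right annihilator ideals. Then S itself is a prime algebra. -/
import Mathlib


open Polynomial

set_option synthInstance.maxHeartbeats 1000000
set_option maxHeartbeats 1000000

noncomputable section

variable (k : Type*) [Field k] [CharZero k]

/-- The operator `p`: multiplication by `X` on `k[X]`. -/
def pOp : Module.End k (Polynomial k) := LinearMap.mulLeft k (X : Polynomial k)

/-- The operator `q = d/dX` on `k[X]`. -/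
def qOp : Module.End k (Polynomial k) := derivative

/-- The (first) Weyl algebra, realized concretely as the subalgebra of
`End_k(k[X])` generated by multiplication by `X` and `d/dX`.  (In characteristic
zero this is a faithful model of `k⟨p,q | qp - pq = 1⟩`.) -/
def WeylA : Subalgebra k (Module.End k (Polynomial k)) :=
  Algebra.adjoin k {pOp k, qOp k}

/-- The element `p` of the Weyl algebra. -/
def pW : WeylA k := ⟨pOp k, Algebra.subset_adjoin (Set.mem_insert _ _)⟩

/-- The element `q` of the Weyl algebra. -/
def qW : WeylA k := ⟨qOp k, Algebra.subset_adjoin (Set.mem_insert_of_mem _ rfl)⟩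

variable (N : ℕ)

/-- `M_N(W)`, the `N×N` matrices over the Weyl algebra. -/
abbrev MW := Matrix (Fin N) (Fin N) (WeylA k)

/-- The scalar matrix `p·Id_N`. -/
def pM : MW k N := Matrix.diagonal fun _ => pW k

/-- The scalar matrix `q·Id_N`. -/
def qM : MW k N := Matrix.diagonal fun _ => qW k

/-- The derivation `∂_q(a) = [a,p]` on `M_N(W)`. -/
def dq (a : MW k N) : MW k N := a * pM k N - pM k N * a

/-- Evaluation of a polynomial at `p`, i.e. the embedding `k[p] → W`. -/
def polyP : Polynomial k →ₐ[k] WeylA k := Polynomial.aeval (pW k)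

/-- Evaluation of a polynomial at `q`, i.e. the embedding `k[q] → W`. -/
def polyQ : Polynomial k →ₐ[k] WeylA k := Polynomial.aeval (qW k)


variable {k} in
/-- `I` is a (two-sided) ideal of the (possibly non-unital) subalgebra `S`. -/
def IsIdealOf {N : ℕ} (S : NonUnitalSubalgebra k (MW k N)) (I : Set (MW k N)) : Prop :=
  I ⊆ S ∧ (0 : MW k N) ∈ I ∧ (∀ x y, x ∈ I → y ∈ I → x + y ∈ I) ∧
    (∀ x ∈ I, -x ∈ I) ∧ ∀ x ∈ I, ∀ a ∈ S, a * x ∈ I ∧ x * a ∈ I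

variable {k} in
/-- The (possibly non-unital) algebra `S` is prime: for ideals `I, J` of `S`,
`I·J = 0` implies `I = 0` or `J = 0`. -/
def IsPrimeAlg {N : ℕ} (S : NonUnitalSubalgebra k (MW k N)) : Prop :=
  ∀ I J : Set (MW k N), IsIdealOf S I → IsIdealOf S J →
    (∀ x ∈ I, ∀ y ∈ J, x * y = 0) → I ⊆ {0} ∨ J ⊆ {0}

/-! ### Auxiliary machinery for Proposition 4.2.2 -/

set_option linter.unusedSectionVars false
set_option maxHeartbeats 4000000

namespace Prop422

section AbstractRing

variable {R : Type*} [Ring R]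

/-- The inner derivation `a ↦ a*p - p*a` as an additive endomorphism. -/
def adE (p : R) : AddMonoid.End R :=
  { toFun := fun a => a * p - p * a
    map_zero' := by simp
    map_add' := fun a b => by
      simp only [add_mul, mul_add]
      abel }

/-- Iterated inner derivation. -/
def adn (p : R) (n : ℕ) (a : R) : R := ((adE p) ^ n) a

lemma adn_zero (p : R) (a : R) : adn p 0 a = a := rfl

lemma adn_succ (p : R) (n : ℕ) (a : R) : adn p (n + 1) a = adn p n a * p - p * adn p n a := by
  show ((adE p) ^ (n+1)) a = _
  rw [pow_succ']
  rfl

@[simp] lemma adn_of_zero (p : R) (n : ℕ) : adn p n (0 : R) = 0 := by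
  show ((adE p) ^ n) 0 = 0
  exact map_zero _

lemma adn_nsmul (p : R) (n c : ℕ) (a : R) : adn p n (c • a) = c • adn p n a := by
  show ((adE p) ^ n) (c • a) = c • ((adE p) ^ n) a
  exact map_nsmul _ _ _

lemma adn_add (p : R) (n : ℕ) (a b : R) : adn p n (a + b) = adn p n a + adn p n b := by
  show ((adE p) ^ n) (a + b) = _
  exact map_add _ _ _

lemma ad_mul (p : R) (a b : R) :
    adn p 1 (a * b) = a * adn p 1 b + adn p 1 a * b := by
  rw [adn_succ, adn_succ, adn_succ, adn_zero, adn_zero, adn_zero]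
  simp only [mul_sub, sub_mul, mul_assoc]
  abel

/-- Iterated Leibniz rule. -/
lemma leibniz (p : R) (m : ℕ) (a b : R) :
    adn p m (a * b) = ∑ u ∈ Finset.range (m + 1), (m.choose u) • (adn p u a * adn p (m - u) b) := by
  induction m with
  | zero => simp [adn_zero]
  | succ m ih =>
    have hD : ∀ x : R, adn p (m + 1) x = adn p 1 (adn p m x) := by
      intro x
      rw [adn_succ, adn_succ, adn_zero]
    rw [hD, ih]
    have hmap : adn p 1 (∑ u ∈ Finset.range (m + 1), (m.choose u) • (adn p u a * adn p (m - u) b))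
        = ∑ u ∈ Finset.range (m + 1), (m.choose u) • adn p 1 (adn p u a * adn p (m - u) b) := by
      show ((adE p) ^ 1) _ = _
      rw [map_sum]
      exact Finset.sum_congr rfl fun u _ => map_nsmul _ _ _
    rw [hmap]
    have hterm : ∀ u ∈ Finset.range (m + 1),
        (m.choose u) • adn p 1 (adn p u a * adn p (m - u) b)
        = (m.choose u) • (adn p u a * adn p (m + 1 - u) b)
          + (m.choose u) • (adn p (u + 1) a * adn p (m - u) b) := by
      intro u hu
      have hu' : u ≤ m := by have := Finset.mem_range.mp hu; omega
      rw [ad_mul, smul_add]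
      congr 2
      · have h1 : adn p 1 (adn p (m - u) b) = adn p (m - u + 1) b := by
          rw [adn_succ, adn_succ, adn_zero]
        rw [h1, show m - u + 1 = m + 1 - u by omega]
      · have h1 : adn p 1 (adn p u a) = adn p (u + 1) a := by
          rw [adn_succ, adn_succ, adn_zero]
        rw [h1]
    rw [Finset.sum_congr rfl hterm, Finset.sum_add_distrib]
    have h2 : ∀ u ∈ Finset.range (m + 1),
        (m.choose u) • (adn p (u + 1) a * adn p (m - u) b)
        = (m.choose u) • (adn p (u + 1) a * adn p (m + 1 - (u + 1)) b) := by
      intro u hu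
      rw [show m - u = m + 1 - (u + 1) by omega]
    rw [Finset.sum_congr rfl h2]
    rw [Finset.sum_range_succ' (fun u => ((m+1).choose u) • (adn p u a * adn p (m + 1 - u) b)) (m + 1)]
    simp only [Nat.choose_zero_right, one_smul, Nat.sub_zero, adn_zero]
    have hpascal : ∀ u ∈ Finset.range (m + 1),
        ((m+1).choose (u+1)) • (adn p (u+1) a * adn p (m + 1 - (u+1)) b)
        = (m.choose u) • (adn p (u+1) a * adn p (m + 1 - (u+1)) b)
          + (m.choose (u+1)) • (adn p (u+1) a * adn p (m + 1 - (u+1)) b) := by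
      intro u _
      rw [Nat.choose_succ_succ, add_smul]
    rw [Finset.sum_congr rfl hpascal, Finset.sum_add_distrib]
    have hlast : ∑ u ∈ Finset.range (m + 1),
          (m.choose (u+1)) • (adn p (u+1) a * adn p (m + 1 - (u+1)) b)
        = ∑ u ∈ Finset.range m, (m.choose (u+1)) • (adn p (u+1) a * adn p (m + 1 - (u+1)) b) := by
      rw [Finset.sum_range_succ, Nat.choose_succ_self, zero_smul, add_zero]
    rw [hlast]
    have hfirst : ∑ u ∈ Finset.range (m + 1), (m.choose u) • (adn p u a * adn p (m + 1 - u) b)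
        = ∑ u ∈ Finset.range m, (m.choose (u+1)) • (adn p (u+1) a * adn p (m + 1 - (u+1)) b)
          + (a * adn p (m + 1) b) := by
      rw [Finset.sum_range_succ' (fun u => (m.choose u) • (adn p u a * adn p (m + 1 - u) b)) m]
      simp only [Nat.choose_zero_right, one_smul, Nat.sub_zero, adn_zero]
    rw [hfirst]
    abel

/-- Pushing a power of `p` through, for an element killing all derivatives. -/
lemma killer_key (p x : R) (Y : Set R) (hkill : ∀ (l : ℕ), ∀ y' ∈ Y, x * adn p l y' = 0) :
    ∀ (c l : ℕ), ∀ y' ∈ Y, x * (p ^ c * adn p l y') = 0 := by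
  intro c
  induction c with
  | zero =>
    intro l y' hy'
    rw [pow_zero, one_mul]
    exact hkill l y' hy'
  | succ c ih =>
    intro l y' hy'
    have hp : p * adn p l y' = adn p l y' * p - adn p (l + 1) y' := by
      rw [adn_succ, sub_sub_cancel]
    rw [pow_succ, mul_assoc, hp, mul_sub, mul_sub, ← mul_assoc (p ^ c),
      ← mul_assoc x, ih l y' hy', zero_mul, ih (l + 1) y' hy', sub_zero]

end AbstractRing

end Prop422

namespace Prop422

section Main

variable {k : Type*} [Field k] [CharZero k] {N : ℕ}
variable {S S₁ : NonUnitalSubalgebra k (MW k N)}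

/-- cancellation of nonzero natural scalars in char zero -/
lemma nsmul_cancel {c : ℕ} (hc : c ≠ 0) {v : MW k N} (h : c • v = 0) : v = 0 := by
  have h' : (c : k) • v = 0 := by rw [Nat.cast_smul_eq_nsmul]; exact h
  rcases smul_eq_zero.mp h' with h'' | h''
  · exact absurd h'' (Nat.cast_ne_zero.mpr hc)
  · exact h''

/-- `dq` is `adn _ 1`. -/
lemma adn_one_eq_dq (a : MW k N) : adn (pM k N) 1 a = dq k N a := by
  rw [adn_succ, adn_zero]; rfl

/-- S is closed under iterated derivations. -/
lemma adn_mem_S (hdq : ∀ a ∈ S, dq k N a ∈ S) {a : MW k N} (ha : a ∈ S) (n : ℕ) :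
    adn (pM k N) n a ∈ S := by
  induction n with
  | zero => exact ha
  | succ n ih =>
    have h : adn (pM k N) (n + 1) a = dq k N (adn (pM k N) n a) := by
      rw [adn_succ]; rfl
    rw [h]
    exact hdq _ ih

lemma S_le_S₁
    (hS₁ : (S₁ : Set (MW k N)) =
      ↑(Submodule.span k {y : MW k N | ∃ n : ℕ, ∃ s ∈ S, y = pM k N ^ n * s}))
    {a : MW k N} (ha : a ∈ S) : a ∈ S₁ := by
  have h : a ∈ (S₁ : Set (MW k N)) := by
    rw [hS₁]
    exact Submodule.subset_span ⟨0, a, ha, by rw [pow_zero, one_mul]⟩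
  exact h

/-! #### The prime engine -/

/-- Generating set for the two-sided ideal of `S₁` generated by `x`. -/
def genSet (S₁ : NonUnitalSubalgebra k (MW k N)) (x : MW k N) : Set (MW k N) :=
  ({x} ∪ {z | ∃ u ∈ S₁, z = u * x} ∪ {z | ∃ u ∈ S₁, z = x * u})
    ∪ {z | ∃ u ∈ S₁, ∃ v ∈ S₁, z = u * x * v}

lemma mem_genSet_self (S₁ : NonUnitalSubalgebra k (MW k N)) (x : MW k N) :
    x ∈ genSet S₁ x :=
  Or.inl (Or.inl (Or.inl rfl))

lemma genSet_subset {x : MW k N} (hx : x ∈ S₁) :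
    genSet S₁ x ⊆ (S₁ : Set (MW k N)) := by
  rintro z (((rfl | ⟨u, hu, rfl⟩) | ⟨u, hu, rfl⟩) | ⟨u, hu, v, hv, rfl⟩)
  · exact hx
  · exact mul_mem hu hx
  · exact mul_mem hx hu
  · exact mul_mem (mul_mem hu hx) hv

lemma genSet_mul_left {x : MW k N} (hx : x ∈ S₁) {c : MW k N} (hc : c ∈ S₁) :
    ∀ g ∈ genSet S₁ x, c * g ∈ genSet S₁ x := by
  rintro g (((rfl | ⟨u, hu, rfl⟩) | ⟨u, hu, rfl⟩) | ⟨u, hu, v, hv, rfl⟩)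
  · exact Or.inl (Or.inl (Or.inr ⟨c, hc, rfl⟩))
  · exact Or.inl (Or.inl (Or.inr ⟨c * u, mul_mem hc hu, by rw [mul_assoc]⟩))
  · exact Or.inr ⟨c, hc, u, hu, by rw [mul_assoc]⟩
  · exact Or.inr ⟨c * u, mul_mem hc hu, v, hv, by rw [← mul_assoc, ← mul_assoc]⟩

lemma genSet_mul_right {x : MW k N} (hx : x ∈ S₁) {c : MW k N} (hc : c ∈ S₁) :
    ∀ g ∈ genSet S₁ x, g * c ∈ genSet S₁ x := by
  rintro g (((rfl | ⟨u, hu, rfl⟩) | ⟨u, hu, rfl⟩) | ⟨u, hu, v, hv, rfl⟩)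
  · exact Or.inl (Or.inr ⟨c, hc, rfl⟩)
  · exact Or.inr ⟨u, hu, c, hc, rfl⟩
  · exact Or.inl (Or.inr ⟨u * c, mul_mem hu hc, by rw [mul_assoc]⟩)
  · exact Or.inr ⟨u, hu, v * c, mul_mem hv hc, by rw [← mul_assoc]⟩

lemma ideal_span_genSet {x : MW k N} (hx : x ∈ S₁) :
    IsIdealOf S₁ ((Submodule.span k (genSet S₁ x) : Submodule k (MW k N)) : Set (MW k N)) := by
  have hsub : (Submodule.span k (genSet S₁ x) : Submodule k (MW k N)) ≤ S₁.toSubmodule := by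
    rw [Submodule.span_le]
    intro z hz
    rw [SetLike.mem_coe, NonUnitalSubalgebra.mem_toSubmodule]
    exact genSet_subset hx hz
  refine ⟨?_, ?_, ?_, ?_, ?_⟩
  · intro z hz
    have h := hsub hz
    rwa [NonUnitalSubalgebra.mem_toSubmodule] at h
  · exact (Submodule.span k (genSet S₁ x)).zero_mem
  · intro a b ha hb; exact (Submodule.span k (genSet S₁ x)).add_mem ha hb
  · intro a ha
    have h := (Submodule.span k (genSet S₁ x)).smul_mem (-1 : k) ha
    have he : (-1 : k) • a = -a := neg_one_smul k a
    exact he ▸ h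
  · intro z hz a ha
    constructor
    · refine Submodule.span_induction
        (p := fun w _ => a * w ∈ Submodule.span k (genSet S₁ x)) ?_ ?_ ?_ ?_ hz
      · intro g hg; exact Submodule.subset_span (genSet_mul_left hx ha g hg)
      · show a * 0 ∈ Submodule.span k (genSet S₁ x)
        rw [mul_zero]; exact (Submodule.span k (genSet S₁ x)).zero_mem
      · intro w₁ w₂ _ _ h1 h2
        show a * (w₁ + w₂) ∈ _
        rw [mul_add]; exact (Submodule.span k (genSet S₁ x)).add_mem h1 h2
      · intro c w _ h
        show a * (c • w) ∈ _
        rw [mul_smul_comm]; exact (Submodule.span k (genSet S₁ x)).smul_mem c h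
    · refine Submodule.span_induction
        (p := fun w _ => w * a ∈ Submodule.span k (genSet S₁ x)) ?_ ?_ ?_ ?_ hz
      · intro g hg; exact Submodule.subset_span (genSet_mul_right hx ha g hg)
      · show 0 * a ∈ Submodule.span k (genSet S₁ x)
        rw [zero_mul]; exact (Submodule.span k (genSet S₁ x)).zero_mem
      · intro w₁ w₂ _ _ h1 h2
        show (w₁ + w₂) * a ∈ _
        rw [add_mul]; exact (Submodule.span k (genSet S₁ x)).add_mem h1 h2
      · intro c w _ h
        show (c • w) * a ∈ _
        rw [smul_mul_assoc]; exact (Submodule.span k (genSet S₁ x)).smul_mem c h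

/-- The prime engine: if `x·y = 0` and `x·u·y = 0` for all `u ∈ S₁`,
then `x = 0` or `y = 0`. -/
lemma prime_engine (hprime : IsPrimeAlg S₁) {x y : MW k N}
    (hx : x ∈ S₁) (hy : y ∈ S₁) (h0 : x * y = 0)
    (h1 : ∀ u ∈ S₁, x * (u * y) = 0) : x = 0 ∨ y = 0 := by
  have P1 : ∀ g' ∈ genSet S₁ y, x * g' = 0 := by
    rintro g' (((rfl | ⟨u, hu, rfl⟩) | ⟨u, hu, rfl⟩) | ⟨u, hu, v, hv, rfl⟩)
    · exact h0
    · exact h1 u hu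
    · rw [← mul_assoc, h0, zero_mul]
    · rw [show x * (u * y * v) = x * (u * y) * v from (mul_assoc x (u * y) v).symm,
        h1 u hu, zero_mul]
  have Pall : ∀ g ∈ genSet S₁ x, ∀ g' ∈ genSet S₁ y, g * g' = 0 := by
    rintro g (((rfl | ⟨u, hu, rfl⟩) | ⟨u, hu, rfl⟩) | ⟨u, hu, v, hv, rfl⟩) g' hg'
    · exact P1 g' hg'
    · rw [mul_assoc, P1 g' hg', mul_zero]
    · rw [mul_assoc]
      exact P1 _ (genSet_mul_left hy hu g' hg')
    · rw [mul_assoc (u * x) v g', mul_assoc u x (v * g'),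
        P1 _ (genSet_mul_left hy hv g' hg'), mul_zero]
  have lem1 : ∀ g ∈ genSet S₁ x, ∀ b ∈ Submodule.span k (genSet S₁ y), g * b = 0 := by
    intro g hg b hb
    refine Submodule.span_induction (p := fun b _ => g * b = 0) ?_ ?_ ?_ ?_ hb
    · intro g' hg'; exact Pall g hg g' hg'
    · exact mul_zero g
    · intro b₁ b₂ _ _ e1 e2; show g * (b₁ + b₂) = 0; rw [mul_add, e1, e2, add_zero]
    · intro c b _ e; show g * (c • b) = 0; rw [mul_smul_comm, e, smul_zero]
  have lem2 : ∀ a ∈ Submodule.span k (genSet S₁ x), ∀ b ∈ Submodule.span k (genSet S₁ y),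
      a * b = 0 := by
    intro a ha
    refine Submodule.span_induction
      (p := fun a _ => ∀ b ∈ Submodule.span k (genSet S₁ y), a * b = 0) ?_ ?_ ?_ ?_ ha
    · intro g hg b hb; exact lem1 g hg b hb
    · intro b _; exact zero_mul b
    · intro a₁ a₂ _ _ e1 e2 b hb; show (a₁ + a₂) * b = 0; rw [add_mul, e1 b hb, e2 b hb, add_zero]
    · intro c a _ e b hb; show (c • a) * b = 0; rw [smul_mul_assoc, e b hb, smul_zero]
  rcases hprime _ _ (ideal_span_genSet hx) (ideal_span_genSet hy) lem2 with h | h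
  · left
    exact h (Submodule.subset_span (mem_genSet_self S₁ x))
  · right
    exact h (Submodule.subset_span (mem_genSet_self S₁ y))

/-! #### Killer extension -/

/-- If `x` kills all iterated derivatives of a left-`S`-stable class `Y`, then
`x` kills `u * y'` for every `u ∈ S₁`, `y' ∈ Y`. -/
lemma killer_ext
    (hS₁ : (S₁ : Set (MW k N)) =
      ↑(Submodule.span k {y : MW k N | ∃ n : ℕ, ∃ s ∈ S, y = pM k N ^ n * s}))
    {Y : Set (MW k N)} (hYS : ∀ s ∈ S, ∀ y' ∈ Y, s * y' ∈ Y)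
    {x : MW k N} (hkill : ∀ (l : ℕ), ∀ y' ∈ Y, x * adn (pM k N) l y' = 0) :
    ∀ u ∈ S₁, ∀ y' ∈ Y, x * (u * y') = 0 := by
  have key : ∀ (c l : ℕ), ∀ y' ∈ Y, x * ((pM k N) ^ c * adn (pM k N) l y') = 0 :=
    killer_key (pM k N) x Y hkill
  intro u hu y' hy'
  have hu' : u ∈ Submodule.span k {y : MW k N | ∃ n : ℕ, ∃ s ∈ S, y = pM k N ^ n * s} := by
    have h : u ∈ (S₁ : Set (MW k N)) := hu
    rwa [hS₁] at h
  refine Submodule.span_induction (p := fun u _ => ∀ y' ∈ Y, x * (u * y') = 0)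
    ?_ ?_ ?_ ?_ hu' y' hy'
  · rintro w ⟨n, s, hs, rfl⟩ y'' hy''
    rw [mul_assoc]
    have h := key n 0 (s * y'') (hYS s hs y'' hy'')
    rwa [adn_zero] at h
  · intro y'' _; rw [zero_mul, mul_zero]
  · intro a b _ _ ea eb y'' hy''
    show x * ((a + b) * y'') = 0
    rw [add_mul, mul_add, ea y'' hy'', eb y'' hy'', add_zero]
  · intro c a _ e y'' hy''
    show x * ((c • a) * y'') = 0
    rw [smul_mul_assoc, mul_smul_comm, e y'' hy'', smul_zero]

end Main

end Prop422

namespace Prop422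

section StepA

variable {k : Type*} [Field k] [CharZero k] {N : ℕ}
variable {S S₁ : NonUnitalSubalgebra k (MW k N)}

/-- `(n+1)`-fold products of elements of `I`. -/
def ProdSet (I : Set (MW k N)) : ℕ → Set (MW k N)
  | 0 => I
  | (n+1) => {z | ∃ b ∈ ProdSet I n, ∃ x ∈ I, z = b * x}

lemma prodSet_subset_S {I : Set (MW k N)} (hIS : I ⊆ ↑S) :
    ∀ n, ProdSet I n ⊆ (S : Set (MW k N)) := by
  intro n
  induction n with
  | zero => exact hIS
  | succ n ih =>
    rintro z ⟨b, hb, x, hx, rfl⟩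
    exact mul_mem (ih hb) (hIS hx)

lemma prodSet_mul_S {I : Set (MW k N)}
    (hIr : ∀ x ∈ I, ∀ s ∈ S, x * s ∈ I) :
    ∀ n, ∀ b ∈ ProdSet I n, ∀ s ∈ S, b * s ∈ ProdSet I n := by
  intro n
  induction n with
  | zero => exact hIr
  | succ n ih =>
    rintro z ⟨b, hb, x, hx, rfl⟩ s hs
    exact ⟨b, hb, x * s, hIr x hx s hs, by rw [mul_assoc]⟩

lemma prodSet_S_mul {I : Set (MW k N)}
    (hIl : ∀ x ∈ I, ∀ s ∈ S, s * x ∈ I) :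
    ∀ n, ∀ b ∈ ProdSet I n, ∀ s ∈ S, s * b ∈ ProdSet I n := by
  intro n
  induction n with
  | zero => intro b hb s hs; exact hIl b hb s hs
  | succ n ih =>
    rintro z ⟨b, hb, x, hx, rfl⟩ s hs
    exact ⟨s * b, ih b hb s hs, x, hx, by rw [mul_assoc]⟩

lemma prodSet_succ_left {I : Set (MW k N)} :
    ∀ n, ∀ z ∈ ProdSet I (n+1), ∃ x ∈ I, ∃ c ∈ ProdSet I n, z = x * c := by
  intro n
  induction n with
  | zero =>
    rintro z ⟨b, hb, x, hx, rfl⟩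
    exact ⟨b, hb, x, hx, rfl⟩
  | succ n ih =>
    rintro z ⟨b, hb, x, hx, rfl⟩
    obtain ⟨x', hx', c, hc, rfl⟩ := ih b hb
    exact ⟨x', hx', c * x, ⟨c, hc, x, hx, rfl⟩, by rw [mul_assoc]⟩

lemma prodSet_concat {I : Set (MW k N)} :
    ∀ l m, ∀ b ∈ ProdSet I m, ∀ c ∈ ProdSet I l, b * c ∈ ProdSet I (m + l + 1) := by
  intro l
  induction l with
  | zero =>
    intro m b hb c hc
    exact ⟨b, hb, c, hc, rfl⟩
  | succ l ih =>
    rintro m b hb z ⟨c, hc, x, hx, rfl⟩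
    have h := ih m b hb c hc
    have : b * (c * x) = (b * c) * x := by rw [mul_assoc]
    rw [this]
    exact ⟨b * c, h, x, hx, rfl⟩

/-- Products of `n+1` elements of `I` kill `D^j(J)` for `j ≤ n`. -/
lemma prod_kills (hdq : ∀ a ∈ S, dq k N a ∈ S)
    {I J : Set (MW k N)} (hI : IsIdealOf S I) (hJ : IsIdealOf S J)
    (hIJ : ∀ x ∈ I, ∀ y ∈ J, x * y = 0) :
    ∀ n, ∀ b ∈ ProdSet I n, ∀ j ≤ n, ∀ y ∈ J, b * adn (pM k N) j y = 0 := by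
  intro n
  induction n with
  | zero =>
    intro b hb j hj y hy
    rw [Nat.le_zero.mp hj, adn_zero]
    exact hIJ b hb y hy
  | succ n ih =>
    rintro z ⟨b, hb, x, hx, rfl⟩ j hj y hy
    have h0 : adn (pM k N) j (x * y) = 0 := by rw [hIJ x hx y hy, adn_of_zero]
    have hexp := leibniz (pM k N) j x y
    rw [h0] at hexp
    rw [Finset.sum_range_succ'
      (fun u => (j.choose u) • (adn (pM k N) u x * adn (pM k N) (j - u) y)) j] at hexp
    simp only [Nat.choose_zero_right, one_smul, Nat.sub_zero, adn_zero] at hexp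
    -- hexp : 0 = Σ_{u ∈ range j} C(j,u+1) • (adn (u+1) x * adn (j-(u+1)) y) + x * adn j y
    have h3 : b * (∑ u ∈ Finset.range j,
        (j.choose (u+1)) • (adn (pM k N) (u+1) x * adn (pM k N) (j - (u+1)) y)) = 0 := by
      rw [Finset.mul_sum]
      refine Finset.sum_eq_zero fun u hu => ?_
      rw [mul_smul_comm, ← mul_assoc]
      have hbx : b * adn (pM k N) (u+1) x ∈ ProdSet I n := by
        refine prodSet_mul_S (fun x' hx' s hs => (hI.2.2.2.2 x' hx' s hs).2) n b hb _ ?_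
        exact adn_mem_S hdq (hI.1 hx) (u+1)
      rw [ih _ hbx (j - (u+1)) (by omega) y hy, smul_zero]
    have h2 : (0 : MW k N) = b * (∑ u ∈ Finset.range j,
        (j.choose (u+1)) • (adn (pM k N) (u+1) x * adn (pM k N) (j - (u+1)) y))
        + b * (x * adn (pM k N) j y) := by
      calc (0 : MW k N) = b * 0 := (mul_zero b).symm
        _ = _ := by rw [← mul_add, ← hexp]
    rw [h3, zero_add] at h2
    rw [mul_assoc]
    exact h2.symm

/-- Step A: if `I·J = 0` and `J` has a nonzero element, all sufficiently long
products of elements of `I` vanish. -/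
lemma stepA (hdq : ∀ a ∈ S, dq k N a ∈ S)
    (hS₁ : (S₁ : Set (MW k N)) =
      ↑(Submodule.span k {y : MW k N | ∃ n : ℕ, ∃ s ∈ S, y = pM k N ^ n * s}))
    (hprime : IsPrimeAlg S₁)
    (hacc : ∀ c : ℕ → Set (MW k N),
      (∀ i, ∃ X ⊆ (S₁ : Set (MW k N)),
        c i = {a : MW k N | a ∈ S₁ ∧ ∀ x ∈ X, x * a = 0}) →
      (∀ i, c i ⊆ c (i + 1)) → ∃ n, ∀ m, n ≤ m → c m = c n)
    {I J : Set (MW k N)} (hI : IsIdealOf S I) (hJ : IsIdealOf S J)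
    (hIJ : ∀ x ∈ I, ∀ y ∈ J, x * y = 0)
    {ys : MW k N} (hys : ys ∈ J) (hys0 : ys ≠ 0) :
    ∃ M, ∀ b ∈ ProdSet I M, b = 0 := by
  set c : ℕ → Set (MW k N) :=
    fun n => {a : MW k N | a ∈ S₁ ∧ ∀ x ∈ ProdSet I n, x * a = 0} with hc
  have hform : ∀ i, ∃ X ⊆ (S₁ : Set (MW k N)),
      c i = {a : MW k N | a ∈ S₁ ∧ ∀ x ∈ X, x * a = 0} := by
    intro i
    exact ⟨ProdSet I i, fun a ha => S_le_S₁ hS₁ (prodSet_subset_S hI.1 i ha), rfl⟩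
  have hmono : ∀ i, c i ⊆ c (i + 1) := by
    rintro i a ⟨h1, h2⟩
    refine ⟨h1, fun z hz => ?_⟩
    obtain ⟨x, hx, cc, hcc, rfl⟩ := prodSet_succ_left i z hz
    rw [mul_assoc, h2 cc hcc, mul_zero]
  obtain ⟨M, hM⟩ := hacc c hform hmono
  refine ⟨M, fun b hb => ?_⟩
  have hkillall : ∀ (j : ℕ), ∀ y ∈ J, b * adn (pM k N) j y = 0 := by
    intro j y hy
    rcases le_or_gt j M with h | h
    · exact prod_kills hdq hI hJ hIJ M b hb j h y hy
    · have hmem : adn (pM k N) j y ∈ c j := by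
        refine ⟨S_le_S₁ hS₁ (adn_mem_S hdq (hJ.1 hy) j), fun x hx => ?_⟩
        exact prod_kills hdq hI hJ hIJ j x hx j le_rfl y hy
      have hmem' : adn (pM k N) j y ∈ c M := by
        rw [← hM j h.le]; exact hmem
      exact hmem'.2 b hb
  have hbS₁ : b ∈ S₁ := S_le_S₁ hS₁ (prodSet_subset_S hI.1 M hb)
  have h0 : b * ys = 0 := by
    have h := hkillall 0 ys hys; rwa [adn_zero] at h
  have h1 : ∀ u ∈ S₁, b * (u * ys) = 0 := by
    intro u hu
    exact killer_ext hS₁ (fun s hs y' hy' => (hJ.2.2.2.2 y' hy' s hs).1)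
      (fun l y' hy' => hkillall l y' hy') u hu ys hys
  rcases prime_engine hprime hbS₁ (S_le_S₁ hS₁ (hJ.1 hys)) h0 h1 with h | h
  · exact h
  · exact absurd h hys0

end StepA

end Prop422

namespace Prop422

section StepC

variable {k : Type*} [Field k] [CharZero k] {N : ℕ}
variable {S S₁ : NonUnitalSubalgebra k (MW k N)}

/-- A "good set": a nonzero two-sided `S`-stable set with all pairwise products zero. -/
def GoodSet (S : NonUnitalSubalgebra k (MW k N)) (A : Set (MW k N)) : Prop :=
  A ⊆ (S : Set (MW k N)) ∧ (∀ a ∈ A, ∀ s ∈ S, s * a ∈ A ∧ a * s ∈ A) ∧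
    (∀ a ∈ A, ∀ b ∈ A, a * b = 0) ∧ (∃ w ∈ A, w ≠ 0)

/-- The strict-growth step: given a good set `A`, there is a smaller good set `B`
and an element `b₀ ∈ S₁` killed (on the right) by all of `B` but not by all of `A`. -/
lemma stepC (hdq : ∀ a ∈ S, dq k N a ∈ S)
    (hS₁ : (S₁ : Set (MW k N)) =
      ↑(Submodule.span k {y : MW k N | ∃ n : ℕ, ∃ s ∈ S, y = pM k N ^ n * s}))
    (hprime : IsPrimeAlg S₁)
    {A : Set (MW k N)} (hA : GoodSet S A) :
    ∃ B : Set (MW k N), GoodSet S B ∧ B ⊆ A ∧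
      ∃ b₀, b₀ ∈ S₁ ∧ (∀ z ∈ B, z * b₀ = 0) ∧ ∃ x ∈ A, x * b₀ ≠ 0 := by
  classical
  obtain ⟨hAS, habs, hA0, w, hw, hw0⟩ := hA
  -- the tier exists
  have htier : ∃ n, ∃ x ∈ A, ∃ y ∈ A, x * adn (pM k N) n y ≠ 0 := by
    by_contra hall
    push_neg at hall
    have h1 : ∀ u ∈ S₁, w * (u * w) = 0 := fun u hu =>
      killer_ext hS₁ (fun s hs y' hy' => (habs y' hy' s hs).1)
        (fun l y' hy' => hall l w hw y' hy') u hu w hw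
    have h0 : w * w = 0 := hA0 w hw w hw
    rcases prime_engine hprime (S_le_S₁ hS₁ (hAS hw)) (S_le_S₁ hS₁ (hAS hw)) h0 h1 with h | h
    · exact hw0 h
    · exact hw0 h
  set n := Nat.find htier with hn
  obtain ⟨x₀, hx₀, y₀, hy₀, hne⟩ := Nat.find_spec htier
  have hmin : ∀ j, j < n → ∀ x ∈ A, ∀ y ∈ A, x * adn (pM k N) j y = 0 := by
    intro j hj x hx y hy
    by_contra hne'
    exact (Nat.find_min htier hj) ⟨x, hx, y, hy, hne'⟩
  -- C2 : (x · Dⁿy) · Dⁿw' = 0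
  have hC2 : ∀ x ∈ A, ∀ y ∈ A, ∀ w' ∈ A, (x * adn (pM k N) n y) * adn (pM k N) n w' = 0 := by
    intro x hx y hy w' hw'
    have hyw : y * w' = 0 := hA0 y hy w' hw'
    have hl := leibniz (pM k N) (2 * n) y w'
    rw [hyw, adn_of_zero] at hl
    have h0 : (0 : MW k N) = ∑ u ∈ Finset.range (2 * n + 1),
        ((2 * n).choose u) • ((x * adn (pM k N) u y) * adn (pM k N) (2 * n - u) w') := by
      calc (0 : MW k N) = x * 0 := (mul_zero x).symm
        _ = x * ∑ u ∈ Finset.range (2 * n + 1),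
            ((2 * n).choose u) • (adn (pM k N) u y * adn (pM k N) (2 * n - u) w') := by
              rw [← hl]
        _ = _ := by
              rw [Finset.mul_sum]
              exact Finset.sum_congr rfl fun u _ => by rw [mul_smul_comm, ← mul_assoc]
    have hsingle : ∑ u ∈ Finset.range (2 * n + 1),
        ((2 * n).choose u) • ((x * adn (pM k N) u y) * adn (pM k N) (2 * n - u) w')
        = ((2 * n).choose n) • ((x * adn (pM k N) n y) * adn (pM k N) (2 * n - n) w') := by
      refine Finset.sum_eq_single_of_mem n (Finset.mem_range.mpr (by omega)) ?_
      intro u hu hune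
      rcases lt_or_gt_of_ne hune with h | h
      · rw [hmin u h x hx y hy, zero_mul, smul_zero]
      · have h2 : 2 * n - u < n := by
          have := Finset.mem_range.mp hu; omega
        have hxy : x * adn (pM k N) u y ∈ A :=
          (habs x hx _ (adn_mem_S hdq (hAS hy) u)).2
        rw [hmin (2 * n - u) h2 _ hxy w' hw', smul_zero]
    rw [hsingle, show 2 * n - n = n by omega] at h0
    exact nsmul_cancel (Nat.choose_pos (by omega : n ≤ 2 * n)).ne' h0.symm
  -- the right "ideal-transport" identity : (x·Dⁿy)·s = x·Dⁿ(y·s)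
  have hr : ∀ x ∈ A, ∀ y ∈ A, ∀ s ∈ S, (x * adn (pM k N) n y) * s = x * adn (pM k N) n (y * s) := by
    intro x hx y hy s hs
    have hl := leibniz (pM k N) n y s
    have h0 : x * adn (pM k N) n (y * s) = ∑ u ∈ Finset.range (n + 1),
        (n.choose u) • ((x * adn (pM k N) u y) * adn (pM k N) (n - u) s) := by
      rw [hl, Finset.mul_sum]
      exact Finset.sum_congr rfl fun u _ => by rw [mul_smul_comm, ← mul_assoc]
    have hsingle : ∑ u ∈ Finset.range (n + 1),
        (n.choose u) • ((x * adn (pM k N) u y) * adn (pM k N) (n - u) s)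
        = (n.choose n) • ((x * adn (pM k N) n y) * adn (pM k N) (n - n) s) := by
      refine Finset.sum_eq_single_of_mem n (Finset.mem_range.mpr (by omega)) ?_
      intro u hu hune
      have h : u < n := by
        have := Finset.mem_range.mp hu; omega
      rw [hmin u h x hx y hy, zero_mul, smul_zero]
    rw [h0, hsingle, Nat.choose_self, one_smul, Nat.sub_self, adn_zero]
  -- the new good set
  refine ⟨{z | ∃ x ∈ A, ∃ y ∈ A, z = x * adn (pM k N) n y}, ?_, ?_, adn (pM k N) n y₀, ?_, ?_, ?_⟩
  · -- GoodSet
    have hBA : ∀ z ∈ {z | ∃ x ∈ A, ∃ y ∈ A, z = x * adn (pM k N) n y}, z ∈ A := by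
      rintro z ⟨x, hx, y, hy, rfl⟩
      exact (habs x hx _ (adn_mem_S hdq (hAS hy) n)).2
    refine ⟨fun z hz => hAS (hBA z hz), ?_, ?_, ?_⟩
    · rintro z ⟨x, hx, y, hy, rfl⟩ s hs
      constructor
      · exact ⟨s * x, (habs x hx s hs).1, y, hy, by rw [mul_assoc]⟩
      · rw [hr x hx y hy s hs]
        exact ⟨x, hx, y * s, (habs y hy s hs).2, rfl⟩
    · intro a ha b hb
      exact hA0 a (hBA a ha) b (hBA b hb)
    · exact ⟨x₀ * adn (pM k N) n y₀, ⟨x₀, hx₀, y₀, hy₀, rfl⟩, hne⟩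
  · rintro z ⟨x, hx, y, hy, rfl⟩
    exact (habs x hx _ (adn_mem_S hdq (hAS hy) n)).2
  · exact S_le_S₁ hS₁ (adn_mem_S hdq (hAS hy₀) n)
  · rintro z ⟨x, hx, y, hy, rfl⟩
    exact hC2 x hx y hy y₀ hy₀
  · exact ⟨x₀, hx₀, hne⟩

end StepC

end Prop422


/-- Proposition 4.2.2: if `S ⊆ M_N(W)` is `∂_q`-invariant and `S₁ = k[p]·S` is
prime and satisfies the a.c.c. for right annihilator ideals, then `S` is prime. -/
theorem prime_of_envelope_prime (N : ℕ)
    (S S₁ : NonUnitalSubalgebra k (MW k N))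
    (hdq : ∀ a ∈ S, dq k N a ∈ S)
    (hS₁ : (S₁ : Set (MW k N)) =
      ↑(Submodule.span k {y : MW k N | ∃ n : ℕ, ∃ s ∈ S, y = pM k N ^ n * s}))
    (hprime : IsPrimeAlg S₁)
    (hacc : ∀ c : ℕ → Set (MW k N),
      (∀ i, ∃ X ⊆ (S₁ : Set (MW k N)),
        c i = {a : MW k N | a ∈ S₁ ∧ ∀ x ∈ X, x * a = 0}) →
      (∀ i, c i ⊆ c (i + 1)) → ∃ n, ∀ m, n ≤ m → c m = c n) :
    IsPrimeAlg S := by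
  classical
  intro I J hI hJ hIJ
  by_contra hcon
  push_neg at hcon
  obtain ⟨hInz, hJnz⟩ := hcon
  obtain ⟨xs, hxs, hxs0'⟩ := Set.not_subset.mp hInz
  obtain ⟨ys, hys, hys0'⟩ := Set.not_subset.mp hJnz
  have hxs0 : xs ≠ 0 := fun h => hxs0' (Set.mem_singleton_iff.mpr h)
  have hys0 : ys ≠ 0 := fun h => hys0' (Set.mem_singleton_iff.mpr h)
  -- Step A : all long products of elements of I vanish
  obtain ⟨M, hM⟩ := Prop422.stepA hdq hS₁ hprime hacc hI hJ hIJ hys hys0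
  have hex : ∃ m, ∀ b ∈ Prop422.ProdSet I m, b = 0 := ⟨M, hM⟩
  set r := Nat.find hex with hrdef
  have hr : ∀ b ∈ Prop422.ProdSet I r, b = 0 := Nat.find_spec hex
  have hrne : r ≠ 0 := by
    intro h
    have h2 := hr
    rw [h] at h2
    exact hxs0 (h2 xs hxs)
  have hbeyond : ∀ d, ∀ b ∈ Prop422.ProdSet I (r + d), b = 0 := by
    intro d
    induction d with
    | zero => simpa using hr
    | succ d ih =>
      intro z hz
      rw [Nat.add_succ] at hz
      obtain ⟨b, hb, x, hx, rfl⟩ := hz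
      rw [ih b hb, zero_mul]
  have hrpred : ∃ w ∈ Prop422.ProdSet I (r - 1), w ≠ 0 := by
    have h := Nat.find_min hex (show r - 1 < r by omega)
    push_neg at h
    exact h
  obtain ⟨w, hw, hw0⟩ := hrpred
  have hIr : ∀ x ∈ I, ∀ s ∈ S, x * s ∈ I := fun x hx s hs => (hI.2.2.2.2 x hx s hs).2
  have hIl : ∀ x ∈ I, ∀ s ∈ S, s * x ∈ I := fun x hx s hs => (hI.2.2.2.2 x hx s hs).1
  -- the good set K := (r-1)-fold products
  have hGood : Prop422.GoodSet S (Prop422.ProdSet I (r - 1)) := by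
    refine ⟨Prop422.prodSet_subset_S hI.1 _, ?_, ?_, ⟨w, hw, hw0⟩⟩
    · intro a ha s hs
      exact ⟨Prop422.prodSet_S_mul hIl _ a ha s hs, Prop422.prodSet_mul_S hIr _ a ha s hs⟩
    · intro a ha b hb
      have h := Prop422.prodSet_concat (r - 1) (r - 1) a ha b hb
      have he : (r - 1) + (r - 1) + 1 = r + (r - 1) := by omega
      rw [he] at h
      exact hbeyond (r - 1) _ h
  -- Step C : infinite strictly growing chain of right annihilators
  have step : ∀ A : {A : Set (MW k N) // Prop422.GoodSet S A},
      ∃ B : Set (MW k N), Prop422.GoodSet S B ∧ B ⊆ A.1 ∧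
        ∃ b₀, b₀ ∈ S₁ ∧ (∀ z ∈ B, z * b₀ = 0) ∧ ∃ x ∈ A.1, x * b₀ ≠ 0 :=
    fun A => Prop422.stepC hdq hS₁ hprime A.2
  choose B hB1 hB2 b₀ hb₀S hb₀kill xw hxw hxwne using step
  let g : {A : Set (MW k N) // Prop422.GoodSet S A} → {A : Set (MW k N) // Prop422.GoodSet S A} :=
    fun A => ⟨B A, hB1 A⟩
  let Kseq : ℕ → {A : Set (MW k N) // Prop422.GoodSet S A} :=
    fun t => g^[t] ⟨Prop422.ProdSet I (r - 1), hGood⟩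
  have hKsucc : ∀ t, Kseq (t + 1) = g (Kseq t) := fun t => Function.iterate_succ_apply' g t _
  have hform : ∀ t, ∃ X ⊆ (S₁ : Set (MW k N)),
      {a : MW k N | a ∈ S₁ ∧ ∀ x ∈ (Kseq t).1, x * a = 0}
        = {a : MW k N | a ∈ S₁ ∧ ∀ x ∈ X, x * a = 0} :=
    fun t => ⟨(Kseq t).1, fun a ha => Prop422.S_le_S₁ hS₁ ((Kseq t).2.1 ha), rfl⟩
  have hmono : ∀ t, {a : MW k N | a ∈ S₁ ∧ ∀ x ∈ (Kseq t).1, x * a = 0}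
      ⊆ {a : MW k N | a ∈ S₁ ∧ ∀ x ∈ (Kseq (t + 1)).1, x * a = 0} := by
    rintro t a ⟨h1, h2⟩
    refine ⟨h1, fun z hz => ?_⟩
    have hsub : (Kseq (t + 1)).1 ⊆ (Kseq t).1 := by
      rw [hKsucc t]
      exact hB2 (Kseq t)
    exact h2 z (hsub hz)
  obtain ⟨n₀, hn₀⟩ := hacc (fun t => {a : MW k N | a ∈ S₁ ∧ ∀ x ∈ (Kseq t).1, x * a = 0})
    hform hmono
  have hb₀c : b₀ (Kseq n₀) ∈ {a : MW k N | a ∈ S₁ ∧ ∀ x ∈ (Kseq (n₀ + 1)).1, x * a = 0} := by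
    refine ⟨hb₀S (Kseq n₀), fun z hz => ?_⟩
    apply hb₀kill
    have he : (Kseq (n₀ + 1)).1 = B (Kseq n₀) := by rw [hKsucc n₀]
    rwa [he] at hz
  have hb₀c' : b₀ (Kseq n₀) ∈ {a : MW k N | a ∈ S₁ ∧ ∀ x ∈ (Kseq n₀).1, x * a = 0} := by
    rw [← hn₀ (n₀ + 1) (Nat.le_succ n₀)]
    exact hb₀c
  exact hxwne (Kseq n₀) (hb₀c'.2 (xw (Kseq n₀)) (hxw (Kseq n₀)))

end
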